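/- Let I ⊆ ℝ be an open interval, μ ∈ ℝ, and let R, Λ, Θ, U : I → ℝ be C² functions with R > 0, U > 0, R² = U² − μ², (R')² + (R²/(R² + μ²))·(Λ')² = 1, and Θ' = (μ/(R² + μ²))·Λ' on I. Define X(s,t) = (R(s)·cos(t − Θ(s)), R(s)·sin(t − Θ(s)), Λ(s) + μ·(t − Θ(s))), and assume X_s × X_t ≠ 0 on I × ℝ. Then X satisfies the K^{1/4}-translator equation K = n₃⁴ at every point of I × ℝ if and only if U''(s) = −U(s)·U'(s)⁴ for every s ∈ I. -/

import Mathlib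

open Real

noncomputable section

/-- Euclidean dot product on `ℝ³ = ℝ × ℝ × ℝ`. -/
def dot3 (v w : ℝ × ℝ × ℝ) : ℝ := v.1 * w.1 + v.2.1 * w.2.1 + v.2.2 * w.2.2

/-- Cross product on `ℝ³ = ℝ × ℝ × ℝ`. -/
def cross3 (v w : ℝ × ℝ × ℝ) : ℝ × ℝ × ℝ :=
  (v.2.1 * w.2.2 - v.2.2 * w.2.1,
   v.2.2 * w.1 - v.1 * w.2.2,
   v.1 * w.2.1 - v.2.1 * w.1)

/-- The vertical unit vector `e₃ = (0,0,1)`. -/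
def e3 : ℝ × ℝ × ℝ := ((0 : ℝ), (0 : ℝ), (1 : ℝ))

/-- Partial derivative of a parametrized surface w.r.t. the first parameter. -/
def pd1 (X : ℝ → ℝ → ℝ × ℝ × ℝ) (s t : ℝ) : ℝ × ℝ × ℝ := deriv (fun u => X u t) s

/-- Partial derivative of a parametrized surface w.r.t. the second parameter. -/
def pd2 (X : ℝ → ℝ → ℝ × ℝ × ℝ) (s t : ℝ) : ℝ × ℝ × ℝ := deriv (fun v => X s v) t

/-- Unit normal `n = (X_s × X_t)/‖X_s × X_t‖`. -/
def unitNormal (X : ℝ → ℝ → ℝ × ℝ × ℝ) (s t : ℝ) : ℝ × ℝ × ℝ :=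
  (Real.sqrt (dot3 (cross3 (pd1 X s t) (pd2 X s t)) (cross3 (pd1 X s t) (pd2 X s t))))⁻¹ •
    cross3 (pd1 X s t) (pd2 X s t)

/-- Angle function `n₃ = n · e₃`. -/
def angleFun (X : ℝ → ℝ → ℝ × ℝ × ℝ) (s t : ℝ) : ℝ := dot3 (unitNormal X s t) e3

/-- Gaussian curvature `K = ((X_ss·n)(X_tt·n) − (X_st·n)²)/(EG − F²)`. -/
def gauss (X : ℝ → ℝ → ℝ × ℝ × ℝ) (s t : ℝ) : ℝ :=
  (dot3 (pd1 (pd1 X) s t) (unitNormal X s t) * dot3 (pd2 (pd2 X) s t) (unitNormal X s t)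
      - (dot3 (pd2 (pd1 X) s t) (unitNormal X s t)) ^ 2)
    / (dot3 (pd1 X s t) (pd1 X s t) * dot3 (pd2 X s t) (pd2 X s t)
        - (dot3 (pd1 X s t) (pd2 X s t)) ^ 2)

/-!
In the frame that rotates with the angle `t - Θ(s)` about the `e₃`-axis, the patch and its
partial derivatives up to order two have coordinates depending on `s` only, and dot and cross
products are invariant under that rotation, so `K` and `n₃` can be read off from these
coordinates. There `X_s × X_t = (-RΛ', -μR', RR')` has length `U`, so `n₃ = RR'/U = U'`, and
`E = 1`, `F = 0`, `G = U²`. Eliminating `R''` and `Λ''` with the derivatives of `U² = R² + μ²`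
and of the metric relation turns the second fundamental form into `K = -U''/U`, so the translator
equation `K = n₃⁴` reads `-U''/U = U'⁴`.
-/

open Filter Topology

section Calculus

variable {𝕜 F : Type*} [NontriviallyNormedField 𝕜] [NormedAddCommGroup F] [NormedSpace 𝕜 F]
  {f : 𝕜 → F} {I : Set 𝕜} {x : 𝕜} {n : WithTop ℕ∞}

theorem ContDiffOn.differentiableAt_of_isOpen (hf : ContDiffOn 𝕜 n f I) (hI : IsOpen I)
    (hn : n ≠ 0) (hx : x ∈ I) : DifferentiableAt 𝕜 f x :=
  (hf.contDiffAt (hI.mem_nhds hx)).differentiableAt hn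

theorem ContDiffOn.differentiableAt_deriv_of_isOpen (hf : ContDiffOn 𝕜 n f I) (hI : IsOpen I)
    (hn : 2 ≤ n) (hx : x ∈ I) : DifferentiableAt 𝕜 (deriv f) x :=
  (hf.deriv_of_isOpen hI (m := 1) hn).differentiableAt_of_isOpen hI one_ne_zero hx

theorem HasDerivAt.unique_of_eqOn {g : 𝕜 → F} {f' g' : F} (hI : IsOpen I) (hx : x ∈ I)
    (hfg : Set.EqOn f g I) (hf : HasDerivAt f f' x) (hg : HasDerivAt g g' x) : f' = g' :=
  hf.unique (hg.congr_of_eventuallyEq (eventually_of_mem (hI.mem_nhds hx) hfg))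

end Calculus

def rotZ (φ : ℝ) (v : ℝ × ℝ × ℝ) : ℝ × ℝ × ℝ :=
  (cos φ * v.1 - sin φ * v.2.1, sin φ * v.1 + cos φ * v.2.1, v.2.2)

theorem rotZ_smul (φ c : ℝ) (v : ℝ × ℝ × ℝ) : rotZ φ (c • v) = c • rotZ φ v := by
  simp only [rotZ, Prod.smul_fst, Prod.smul_snd, Prod.smul_mk, smul_eq_mul]
  ext <;> simp only <;> ring

theorem rotZ_e3 (φ : ℝ) : rotZ φ e3 = e3 := by
  simp [rotZ, e3]

theorem dot3_rotZ (φ : ℝ) (v w : ℝ × ℝ × ℝ) :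
    dot3 (rotZ φ v) (rotZ φ w) = dot3 v w := by
  simp only [dot3, rotZ]
  linear_combination (v.1 * w.1 + v.2.1 * w.2.1) * sin_sq_add_cos_sq φ

theorem cross3_rotZ (φ : ℝ) (v w : ℝ × ℝ × ℝ) :
    cross3 (rotZ φ v) (rotZ φ w) = rotZ φ (cross3 v w) := by
  simp only [cross3, rotZ, Prod.mk.injEq]
  refine ⟨by ring, by ring, ?_⟩
  linear_combination (v.1 * w.2.1 - v.2.1 * w.1) * sin_sq_add_cos_sq φ

theorem hasDerivAt_rotZ {φ a b c : ℝ → ℝ} {φ' a' b' c' x : ℝ} (hφ : HasDerivAt φ φ' x)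
    (ha : HasDerivAt a a' x) (hb : HasDerivAt b b' x) (hc : HasDerivAt c c' x) :
    HasDerivAt (fun y => rotZ (φ y) (a y, b y, c y))
      (rotZ (φ x) (a' - φ' * b x, b' + φ' * a x, c')) x := by
  convert ((hφ.cos.mul ha).sub (hφ.sin.mul hb)).prodMk
    (((hφ.sin.mul ha).add (hφ.cos.mul hb)).prodMk hc) using 1
  · rfl
  · simp only [rotZ, Prod.mk.injEq, and_true]
    constructor <;> ring

theorem dot3_smul_right (c : ℝ) (v w : ℝ × ℝ × ℝ) : dot3 v (c • w) = c * dot3 v w := by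
  simp only [dot3, Prod.smul_fst, Prod.smul_snd, smul_eq_mul]
  ring

section Frame

variable {X : ℝ → ℝ → ℝ × ℝ × ℝ} {s t φ : ℝ} {a b n : ℝ × ℝ × ℝ}

theorem unitNormal_eq_rotZ (ha : pd1 X s t = rotZ φ a) (hb : pd2 X s t = rotZ φ b) :
    unitNormal X s t = rotZ φ ((√(dot3 (cross3 a b) (cross3 a b)))⁻¹ • cross3 a b) := by
  rw [unitNormal, ha, hb, cross3_rotZ, dot3_rotZ, rotZ_smul]

theorem angleFun_eq_of_rotZ (hn : unitNormal X s t = rotZ φ n) : angleFun X s t = n.2.2 := by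
  rw [angleFun, hn, ← rotZ_e3 φ, dot3_rotZ]
  simp [dot3, e3]

theorem gauss_eq_of_rotZ {A B C : ℝ × ℝ × ℝ} (ha : pd1 X s t = rotZ φ a)
    (hb : pd2 X s t = rotZ φ b) (hA : pd1 (pd1 X) s t = rotZ φ A)
    (hB : pd2 (pd1 X) s t = rotZ φ B) (hC : pd2 (pd2 X) s t = rotZ φ C)
    (hn : unitNormal X s t = rotZ φ n) :
    gauss X s t = (dot3 A n * dot3 C n - dot3 B n ^ 2) / (dot3 a a * dot3 b b - dot3 a b ^ 2) := by
  simp only [gauss, ha, hb, hA, hB, hC, hn, dot3_rotZ]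

end Frame

def helicoidalPatch (μ : ℝ) (R Λ Θ : ℝ → ℝ) (s t : ℝ) : ℝ × ℝ × ℝ :=
  rotZ (t - Θ s) (R s, 0, Λ s + μ * (t - Θ s))

section HelicoidalPatch

variable {μ : ℝ} {R Λ Θ : ℝ → ℝ} {s : ℝ}

theorem pd2_helicoidalPatch (s t : ℝ) :
    pd2 (helicoidalPatch μ R Λ Θ) s t = rotZ (t - Θ s) (0, R s, μ) := by
  have hφ : HasDerivAt (fun v => v - Θ s) 1 t := (hasDerivAt_id t).sub_const _
  refine (hasDerivAt_rotZ hφ (hasDerivAt_const t (R s)) (hasDerivAt_const t 0)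
    ((hφ.const_mul μ).const_add (Λ s))).deriv.trans ?_
  simp

theorem pd22_helicoidalPatch (s t : ℝ) :
    pd2 (pd2 (helicoidalPatch μ R Λ Θ)) s t = rotZ (t - Θ s) (-R s, 0, 0) := by
  have hφ : HasDerivAt (fun v => v - Θ s) 1 t := (hasDerivAt_id t).sub_const _
  rw [pd2, funext (pd2_helicoidalPatch s)]
  refine (hasDerivAt_rotZ hφ (hasDerivAt_const t 0) (hasDerivAt_const t (R s))
    (hasDerivAt_const t μ)).deriv.trans ?_
  simp

theorem pd1_helicoidalPatch (hR : DifferentiableAt ℝ R s) (hΛ : DifferentiableAt ℝ Λ s)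
    (hΘ : DifferentiableAt ℝ Θ s) (t : ℝ) :
    pd1 (helicoidalPatch μ R Λ Θ) s t =
      rotZ (t - Θ s) (deriv R s, -(R s * deriv Θ s), deriv Λ s - μ * deriv Θ s) := by
  have hφ : HasDerivAt (fun u => t - Θ u) (-deriv Θ s) s := hΘ.hasDerivAt.const_sub t
  refine (hasDerivAt_rotZ hφ hR.hasDerivAt (hasDerivAt_const s 0)
    (hΛ.hasDerivAt.add (hφ.const_mul μ))).deriv.trans ?_
  congr 1
  ext <;> simp <;> ring

theorem pd21_helicoidalPatch (hR : DifferentiableAt ℝ R s) (hΛ : DifferentiableAt ℝ Λ s)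
    (hΘ : DifferentiableAt ℝ Θ s) (t : ℝ) :
    pd2 (pd1 (helicoidalPatch μ R Λ Θ)) s t =
      rotZ (t - Θ s) (R s * deriv Θ s, deriv R s, 0) := by
  have hφ : HasDerivAt (fun v => v - Θ s) 1 t := (hasDerivAt_id t).sub_const _
  rw [pd2, funext (pd1_helicoidalPatch (μ := μ) hR hΛ hΘ)]
  refine (hasDerivAt_rotZ hφ (hasDerivAt_const t _) (hasDerivAt_const t _)
    (hasDerivAt_const t _)).deriv.trans ?_
  simp

theorem pd11_helicoidalPatch
    (hd : ∀ᶠ u in 𝓝 s,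
      DifferentiableAt ℝ R u ∧ DifferentiableAt ℝ Λ u ∧ DifferentiableAt ℝ Θ u)
    (hR : DifferentiableAt ℝ (deriv R) s) (hΛ : DifferentiableAt ℝ (deriv Λ) s)
    (hΘ : DifferentiableAt ℝ (deriv Θ) s) (t : ℝ) :
    pd1 (pd1 (helicoidalPatch μ R Λ Θ)) s t =
      rotZ (t - Θ s) (deriv (deriv R) s - R s * deriv Θ s ^ 2,
        -(2 * deriv R s * deriv Θ s + R s * deriv (deriv Θ) s),
        deriv (deriv Λ) s - μ * deriv (deriv Θ) s) := by
  obtain ⟨hR₁, -, hΘ₁⟩ := hd.self_of_nhds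
  have hφ : HasDerivAt (fun u => t - Θ u) (-deriv Θ s) s := hΘ₁.hasDerivAt.const_sub t
  have hpd1 : (fun u => pd1 (helicoidalPatch μ R Λ Θ) u t) =ᶠ[𝓝 s] fun u =>
      rotZ (t - Θ u) (deriv R u, -(R u * deriv Θ u), deriv Λ u - μ * deriv Θ u) :=
    hd.mono fun u ⟨hRu, hΛu, hΘu⟩ => pd1_helicoidalPatch hRu hΛu hΘu t
  rw [pd1, hpd1.deriv_eq]
  refine (hasDerivAt_rotZ hφ hR.hasDerivAt (hR₁.hasDerivAt.mul hΘ.hasDerivAt).neg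
    (hΛ.hasDerivAt.sub (hΘ.hasDerivAt.const_mul μ))).deriv.trans ?_
  congr 1
  ext <;> simp <;> ring

end HelicoidalPatch

structure IsBourData (I : Set ℝ) (μ : ℝ) (R Λ Θ U : ℝ → ℝ) : Prop where
  isOpen : IsOpen I
  contDiffOn_R : ContDiffOn ℝ 2 R I
  contDiffOn_Λ : ContDiffOn ℝ 2 Λ I
  contDiffOn_Θ : ContDiffOn ℝ 2 Θ I
  contDiffOn_U : ContDiffOn ℝ 2 U I
  U_pos : ∀ s ∈ I, 0 < U s
  sq_R : ∀ s ∈ I, R s ^ 2 = U s ^ 2 - μ ^ 2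
  metric : ∀ s ∈ I, deriv R s ^ 2 + (R s ^ 2 / (R s ^ 2 + μ ^ 2)) * deriv Λ s ^ 2 = 1
  deriv_Θ : ∀ s ∈ I, deriv Θ s = μ / (R s ^ 2 + μ ^ 2) * deriv Λ s

namespace IsBourData

variable {I : Set ℝ} {μ : ℝ} {R Λ Θ U : ℝ → ℝ} {s : ℝ}

theorem differentiableAt (h : IsBourData I μ R Λ Θ U) (hs : s ∈ I) :
    DifferentiableAt ℝ R s ∧ DifferentiableAt ℝ Λ s ∧ DifferentiableAt ℝ Θ s ∧
      DifferentiableAt ℝ U s :=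
  ⟨h.contDiffOn_R.differentiableAt_of_isOpen h.isOpen two_ne_zero hs,
    h.contDiffOn_Λ.differentiableAt_of_isOpen h.isOpen two_ne_zero hs,
    h.contDiffOn_Θ.differentiableAt_of_isOpen h.isOpen two_ne_zero hs,
    h.contDiffOn_U.differentiableAt_of_isOpen h.isOpen two_ne_zero hs⟩

theorem differentiableAt_deriv (h : IsBourData I μ R Λ Θ U) (hs : s ∈ I) :
    DifferentiableAt ℝ (deriv R) s ∧ DifferentiableAt ℝ (deriv Λ) s ∧
      DifferentiableAt ℝ (deriv Θ) s ∧ DifferentiableAt ℝ (deriv U) s :=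
  ⟨h.contDiffOn_R.differentiableAt_deriv_of_isOpen h.isOpen le_rfl hs,
    h.contDiffOn_Λ.differentiableAt_deriv_of_isOpen h.isOpen le_rfl hs,
    h.contDiffOn_Θ.differentiableAt_deriv_of_isOpen h.isOpen le_rfl hs,
    h.contDiffOn_U.differentiableAt_deriv_of_isOpen h.isOpen le_rfl hs⟩

theorem sq_U (h : IsBourData I μ R Λ Θ U) (hs : s ∈ I) : U s ^ 2 = R s ^ 2 + μ ^ 2 := by
  linarith [h.sq_R s hs]

theorem deriv_Θ_eq (h : IsBourData I μ R Λ Θ U) (hs : s ∈ I) :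
    deriv Θ s = μ * deriv Λ s / U s ^ 2 := by
  rw [h.deriv_Θ s hs, ← h.sq_U hs]
  ring

theorem metric_mul_sq_U (h : IsBourData I μ R Λ Θ U) (hs : s ∈ I) :
    deriv R s ^ 2 * U s ^ 2 + R s ^ 2 * deriv Λ s ^ 2 = U s ^ 2 := by
  have hU := (h.U_pos s hs).ne'
  have hm := h.metric s hs
  rw [← h.sq_U hs] at hm
  field_simp at hm
  linear_combination hm

theorem U_mul_deriv_U (h : IsBourData I μ R Λ Θ U) (hs : s ∈ I) :
    U s * deriv U s = R s * deriv R s := by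
  obtain ⟨hR, -, -, hU⟩ := h.differentiableAt hs
  have := (hU.hasDerivAt.pow 2).unique_of_eqOn h.isOpen hs (fun u hu => h.sq_U hu)
    ((hR.hasDerivAt.pow 2).add_const (μ ^ 2))
  norm_num at this
  linear_combination this / 2

theorem deriv_U_sq_add (h : IsBourData I μ R Λ Θ U) (hs : s ∈ I) :
    deriv U s ^ 2 + U s * deriv (deriv U) s = deriv R s ^ 2 + R s * deriv (deriv R) s := by
  obtain ⟨hR, -, -, hU⟩ := h.differentiableAt hs
  obtain ⟨hR', -, -, hU'⟩ := h.differentiableAt_deriv hs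
  have := (hU.hasDerivAt.mul hU'.hasDerivAt).unique_of_eqOn h.isOpen hs
    (fun u hu => h.U_mul_deriv_U hu) (hR.hasDerivAt.mul hR'.hasDerivAt)
  linear_combination this

theorem deriv_metric (h : IsBourData I μ R Λ Θ U) (hs : s ∈ I) :
    deriv R s * deriv (deriv R) s * U s ^ 2 + deriv R s ^ 2 * (U s * deriv U s)
      + R s * deriv R s * deriv Λ s ^ 2 + R s ^ 2 * deriv Λ s * deriv (deriv Λ) s
      = U s * deriv U s := by
  obtain ⟨hR, hΛ, -, hU⟩ := h.differentiableAt hs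
  obtain ⟨hR', hΛ', -, -⟩ := h.differentiableAt_deriv hs
  have := ((hR'.hasDerivAt.pow 2).mul (hU.hasDerivAt.pow 2) |>.add
      ((hR.hasDerivAt.pow 2).mul (hΛ'.hasDerivAt.pow 2))).unique_of_eqOn h.isOpen hs
    (fun u hu => h.metric_mul_sq_U hu) (hU.hasDerivAt.pow 2)
  norm_num at this
  linear_combination this / 2

theorem unitNormal_eq (h : IsBourData I μ R Λ Θ U) (hs : s ∈ I) (t : ℝ) :
    unitNormal (helicoidalPatch μ R Λ Θ) s t = rotZ (t - Θ s)
      ((U s)⁻¹ • (-(R s * deriv Λ s), -(μ * deriv R s), R s * deriv R s)) := by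
  obtain ⟨hR, hΛ, hΘ, -⟩ := h.differentiableAt hs
  have hcross : cross3 (deriv R s, -(R s * deriv Θ s), deriv Λ s - μ * deriv Θ s) (0, R s, μ) =
      (-(R s * deriv Λ s), -(μ * deriv R s), R s * deriv R s) := by
    simp only [cross3, Prod.mk.injEq]
    exact ⟨by ring, by ring, by ring⟩
  have hnorm : dot3 (-(R s * deriv Λ s), -(μ * deriv R s), R s * deriv R s)
      (-(R s * deriv Λ s), -(μ * deriv R s), R s * deriv R s) = U s ^ 2 := by
    simp only [dot3]
    linear_combination h.metric_mul_sq_U hs - deriv R s ^ 2 * h.sq_U hs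
  rw [unitNormal_eq_rotZ (pd1_helicoidalPatch hR hΛ hΘ t) (pd2_helicoidalPatch s t), hcross,
    hnorm, Real.sqrt_sq (h.U_pos s hs).le]

theorem angleFun_eq (h : IsBourData I μ R Λ Θ U) (hs : s ∈ I) (t : ℝ) :
    angleFun (helicoidalPatch μ R Λ Θ) s t = deriv U s := by
  have hU := (h.U_pos s hs).ne'
  rw [angleFun_eq_of_rotZ (h.unitNormal_eq hs t), Prod.smul_snd, Prod.smul_snd, smul_eq_mul,
    ← h.U_mul_deriv_U hs]
  field_simp

theorem gauss_eq (h : IsBourData I μ R Λ Θ U) (hs : s ∈ I) (t : ℝ) :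
    gauss (helicoidalPatch μ R Λ Θ) s t = -deriv (deriv U) s / U s := by
  obtain ⟨hR, hΛ, hΘ, -⟩ := h.differentiableAt hs
  obtain ⟨hR', hΛ', hΘ', -⟩ := h.differentiableAt_deriv hs
  have hd : ∀ᶠ u in 𝓝 s, DifferentiableAt ℝ R u ∧ DifferentiableAt ℝ Λ u ∧
      DifferentiableAt ℝ Θ u :=
    eventually_of_mem (h.isOpen.mem_nhds hs) fun u hu =>
      ⟨(h.differentiableAt hu).1, (h.differentiableAt hu).2.1, (h.differentiableAt hu).2.2.1⟩
  rw [gauss_eq_of_rotZ (pd1_helicoidalPatch hR hΛ hΘ t) (pd2_helicoidalPatch s t)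
    (pd11_helicoidalPatch hd hR' hΛ' hΘ' t) (pd21_helicoidalPatch hR hΛ hΘ t)
    (pd22_helicoidalPatch s t) (h.unitNormal_eq hs t)]
  have hU := (h.U_pos s hs).ne'
  have hE : dot3 (deriv R s, -(R s * deriv Θ s), deriv Λ s - μ * deriv Θ s)
      (deriv R s, -(R s * deriv Θ s), deriv Λ s - μ * deriv Θ s) = 1 := by
    simp only [dot3]
    rw [h.deriv_Θ_eq hs]
    field_simp
    linear_combination
      U s ^ 2 * h.metric_mul_sq_U hs + deriv Λ s ^ 2 * (U s ^ 2 - μ ^ 2) * h.sq_U hs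
  have hF :
      dot3 (deriv R s, -(R s * deriv Θ s), deriv Λ s - μ * deriv Θ s) (0, R s, μ) = 0 := by
    simp only [dot3]
    rw [h.deriv_Θ_eq hs]
    field_simp
    linear_combination μ * deriv Λ s * h.sq_U hs
  have hG : dot3 (0, R s, μ) (0, R s, μ) = U s ^ 2 := by
    simp only [dot3]
    linear_combination -h.sq_U hs
  simp only [dot3_smul_right, hE, hF, hG]
  simp only [dot3]
  field_simp
  -- `Θ'` and `Θ''` cancel, and `R''`, `Λ''` are eliminated by `deriv_U_sq_add`, `deriv_metric`.
  linear_combination deriv R s ^ 4 * h.sq_U hs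
    - (R s * deriv R s ^ 3 + U s * deriv U s) * h.U_mul_deriv_U hs
    + R s * deriv R s * h.deriv_metric hs
    - (R s * deriv (deriv R) s + deriv R s ^ 2) * h.metric_mul_sq_U hs
    + U s ^ 2 * h.deriv_U_sq_add hs

end IsBourData

theorem bour_translator_iff_ODE_general
    (I : Set ℝ) (hIopen : IsOpen I) (μ : ℝ)
    (R Λ Θ U : ℝ → ℝ)
    (hRC : ContDiffOn ℝ 2 R I) (hΛC : ContDiffOn ℝ 2 Λ I)
    (hΘC : ContDiffOn ℝ 2 Θ I) (hUC : ContDiffOn ℝ 2 U I)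
    (hUpos : ∀ s ∈ I, 0 < U s)
    (hRU : ∀ s ∈ I, (R s) ^ 2 = (U s) ^ 2 - μ ^ 2)
    (hmetric : ∀ s ∈ I,
      (deriv R s) ^ 2 + ((R s) ^ 2 / ((R s) ^ 2 + μ ^ 2)) * (deriv Λ s) ^ 2 = 1)
    (hΘ' : ∀ s ∈ I, deriv Θ s = (μ / ((R s) ^ 2 + μ ^ 2)) * deriv Λ s)
    (X : ℝ → ℝ → ℝ × ℝ × ℝ)
    (hX : ∀ s t, X s t =
      (R s * Real.cos (t - Θ s), R s * Real.sin (t - Θ s), Λ s + μ * (t - Θ s))) :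
    (∀ s ∈ I, ∀ t : ℝ, gauss X s t = (angleFun X s t) ^ 4) ↔
      (∀ s ∈ I, deriv (deriv U) s = -(U s) * (deriv U s) ^ 4) := by
  have h : IsBourData I μ R Λ Θ U := ⟨hIopen, hRC, hΛC, hΘC, hUC, hUpos, hRU, hmetric, hΘ'⟩
  obtain rfl : X = helicoidalPatch μ R Λ Θ := by
    funext s t
    rw [hX]
    simp only [helicoidalPatch, rotZ, Prod.mk.injEq, mul_zero, sub_zero, add_zero, and_true]
    exact ⟨mul_comm _ _, mul_comm _ _⟩
  refine forall₂_congr fun s hs => ?_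
  simp only [h.gauss_eq hs, h.angleFun_eq hs, forall_const, div_eq_iff (h.U_pos s hs).ne']
  constructor <;> intro e <;> linarith

/-- Bour's helicoidal patch satisfies the `K^{1/4}`-translator equation
`K = n₃⁴` at every point iff the Bour function satisfies the ODE `U'' = −U·(U')⁴` on `I`. -/
theorem bour_translator_iff_ODE
    (I : Set ℝ) (hIopen : IsOpen I) (hIconn : I.OrdConnected) (μ : ℝ)
    (R Λ Θ U : ℝ → ℝ)
    (hRC : ContDiffOn ℝ 2 R I) (hΛC : ContDiffOn ℝ 2 Λ I)
    (hΘC : ContDiffOn ℝ 2 Θ I) (hUC : ContDiffOn ℝ 2 U I)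
    (hRpos : ∀ s ∈ I, 0 < R s) (hUpos : ∀ s ∈ I, 0 < U s)
    (hRU : ∀ s ∈ I, (R s) ^ 2 = (U s) ^ 2 - μ ^ 2)
    (hmetric : ∀ s ∈ I,
      (deriv R s) ^ 2 + ((R s) ^ 2 / ((R s) ^ 2 + μ ^ 2)) * (deriv Λ s) ^ 2 = 1)
    (hΘ' : ∀ s ∈ I, deriv Θ s = (μ / ((R s) ^ 2 + μ ^ 2)) * deriv Λ s)
    (X : ℝ → ℝ → ℝ × ℝ × ℝ)
    (hX : ∀ s t, X s t =
      (R s * Real.cos (t - Θ s), R s * Real.sin (t - Θ s), Λ s + μ * (t - Θ s)))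
    (hcross : ∀ s ∈ I, ∀ t : ℝ, cross3 (pd1 X s t) (pd2 X s t) ≠ 0) :
    (∀ s ∈ I, ∀ t : ℝ, gauss X s t = (angleFun X s t) ^ 4) ↔
      (∀ s ∈ I, deriv (deriv U) s = -(U s) * (deriv U s) ^ 4) :=
  bour_translator_iff_ODE_general I hIopen μ R Λ Θ U hRC hΛC hΘC hUC hUpos hRU hmetric hΘ' X hX
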